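/- arXiv:2507.08397 — 2 statements merged into one kernel-verified Lean document; each statement's English description precedes it below -/
import Mathlib

section
/- Every group homomorphism φ from UT₃(𝔽₃) to the multiplicative group ℂˣ of nonzero complex numbers is of the form ρ_{r,s} for some (r,s) ∈ ZMod 3 × ZMod 3; that is, there exist r, s ∈ ZMod 3 such that φ(g(a,b,c)) = ω^{(r*a + s*c).val} for all a,b,c ∈ ZMod 3. -/
open Matrix

/-- The upper unitriangular matrix g(a,b,c) over ZMod 3. -/
def gmat (a b c : ZMod 3) : Matrix (Fin 3) (Fin 3) (ZMod 3) :=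
  !![1, a, b; 0, 1, c; 0, 0, 1]

lemma gmat_mul (a b c a' b' c' : ZMod 3) :
    gmat a b c * gmat a' b' c' = gmat (a + a') (b + b' + a * c') (c + c') := by
  ext i j
  fin_cases i <;> fin_cases j <;>
    simp [gmat, Matrix.mul_apply, Fin.sum_univ_succ, Matrix.vecHead, Matrix.vecTail] <;> ring

lemma gmat_one : gmat 0 0 0 = 1 := by
  ext i j
  fin_cases i <;> fin_cases j <;> simp [gmat, Matrix.one_apply, Matrix.vecHead, Matrix.vecTail]

lemma gmat_mul_inv (a b c : ZMod 3) :
    gmat a b c * gmat (-a) (a * c - b) (-c) = 1 := by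
  rw [gmat_mul, show a + -a = (0 : ZMod 3) by ring,
    show b + (a * c - b) + a * -c = (0 : ZMod 3) by ring,
    show c + -c = (0 : ZMod 3) by ring, gmat_one]

lemma gmat_inv_mul (a b c : ZMod 3) :
    gmat (-a) (a * c - b) (-c) * gmat a b c = 1 := by
  rw [gmat_mul, show -a + a = (0 : ZMod 3) by ring,
    show a * c - b + b + -a * c = (0 : ZMod 3) by ring,
    show -c + c = (0 : ZMod 3) by ring, gmat_one]

/-- g(a,b,c) as a unit of the matrix ring. -/
def gUnit (a b c : ZMod 3) : (Matrix (Fin 3) (Fin 3) (ZMod 3))ˣ :=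
  ⟨gmat a b c, gmat (-a) (a * c - b) (-c), gmat_mul_inv a b c, gmat_inv_mul a b c⟩

/-- The subgroup UT₃(𝔽₃) of upper unitriangular matrices. -/
def UT3 : Subgroup (Matrix (Fin 3) (Fin 3) (ZMod 3))ˣ where
  carrier := {x | ∃ a b c : ZMod 3, (x : Matrix (Fin 3) (Fin 3) (ZMod 3)) = gmat a b c}
  one_mem' := ⟨0, 0, 0, by simpa using gmat_one.symm⟩
  mul_mem' := by
    rintro x y ⟨a, b, c, hx⟩ ⟨a', b', c', hy⟩
    exact ⟨a + a', b + b' + a * c', c + c', by rw [Units.val_mul, hx, hy, gmat_mul]⟩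
  inv_mem' := by
    rintro x ⟨a, b, c, hx⟩
    refine ⟨-a, a * c - b, -c, ?_⟩
    exact Units.inv_eq_of_mul_eq_one_right (by rw [hx, gmat_mul_inv])

/-- g(a,b,c) as an element of UT₃(𝔽₃). -/
def gU (a b c : ZMod 3) : UT3 := ⟨gUnit a b c, ⟨a, b, c, rfl⟩⟩

noncomputable def ω : ℂ := Complex.exp (2 * Real.pi * Complex.I / 3)

/-! The centre {g(0,b,0)} of UT₃(𝔽₃) consists of commutators, so a character into an abelian group
kills it; on the two remaining coordinates a character restricts to characters of ZMod 3, and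
every character of ZMod n into the units of a domain is a ↦ ζ^(r a) for a primitive n-th root ζ. -/

section RootOfUnity

variable {M : Type*} [Monoid M] {n : ℕ} {ζ : M}

lemma pow_zmod_val_add [NeZero n] (hζ : ζ ^ n = 1) (x y : ZMod n) :
    ζ ^ (x + y).val = ζ ^ x.val * ζ ^ y.val := by
  rw [ZMod.val_add, ← pow_eq_pow_mod _ hζ, pow_add]

lemma pow_zmod_val_mul (hζ : ζ ^ n = 1) (x y : ZMod n) :
    ζ ^ (x * y).val = (ζ ^ x.val) ^ y.val := by
  rw [ZMod.val_mul, ← pow_eq_pow_mod _ hζ, pow_mul]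

end RootOfUnity

lemma IsPrimitiveRoot.exists_apply_ofAdd_eq_pow_val {R : Type*} [CommRing R] [IsDomain R]
    {n : ℕ} [NeZero n] {ζ : R} (hζ : IsPrimitiveRoot ζ n) (ψ : Multiplicative (ZMod n) →* Rˣ) :
    ∃ r : ZMod n, ∀ a : ZMod n, (ψ (.ofAdd a) : R) = ζ ^ (r * a).val := by
  have hψ_pow : ((ψ (.ofAdd 1) : R)) ^ n = 1 := by
    rw [← Units.val_pow_eq_pow_val, ← map_pow, ← ofAdd_nsmul, nsmul_one, ZMod.natCast_self,
      ofAdd_zero, map_one, Units.val_one]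
  obtain ⟨i, hin, hi⟩ := hζ.eq_pow_of_pow_eq_one hψ_pow
  refine ⟨i, fun a => ?_⟩
  have hofAdd : Multiplicative.ofAdd a = Multiplicative.ofAdd 1 ^ a.val := by
    rw [← ofAdd_nsmul, nsmul_one, ZMod.natCast_zmod_val]
  rw [hofAdd, map_pow, Units.val_pow_eq_pow_val, pow_zmod_val_mul hζ.pow_eq_one,
    ZMod.val_cast_of_lt hin, hi]

lemma isPrimitiveRoot_ω : IsPrimitiveRoot ω 3 := by
  simpa [ω] using Complex.isPrimitiveRoot_exp 3 (by norm_num)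

lemma gU_mul (a b c a' b' c' : ZMod 3) :
    gU a b c * gU a' b' c' = gU (a + a') (b + b' + a * c') (c + c') :=
  Subtype.ext (Units.ext (gmat_mul a b c a' b' c'))

lemma gU_inv (a b c : ZMod 3) : (gU a b c)⁻¹ = gU (-a) (a * c - b) (-c) :=
  inv_eq_of_mul_eq_one_right (Subtype.ext (Units.ext (gmat_mul_inv a b c)))

lemma gU_eq_center_mul (a b c : ZMod 3) : gU a b c = gU 0 b 0 * (gU 0 0 c * gU a 0 0) := by
  simp only [gU_mul, add_zero, zero_add, mul_zero, zero_mul]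

open scoped commutatorElement

lemma gU_center_eq_commutatorElement (b : ZMod 3) : gU 0 b 0 = ⁅gU b 0 0, gU 0 0 1⁆ := by
  simp only [commutatorElement_def, gU_inv, gU_mul]
  ring_nf

lemma map_gU_center {G : Type*} [CommGroup G] (φ : UT3 →* G) (b : ZMod 3) : φ (gU 0 b 0) = 1 := by
  rw [gU_center_eq_commutatorElement, map_commutatorElement, commutatorElement_eq_one_iff_mul_comm]
  exact mul_comm _ _

def gUHomA : Multiplicative (ZMod 3) →* UT3 :=
  MonoidHom.mk' (fun a => gU a.toAdd 0 0) fun a a' => by simp [gU_mul]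

def gUHomC : Multiplicative (ZMod 3) →* UT3 :=
  MonoidHom.mk' (fun c => gU 0 0 c.toAdd) fun c c' => by simp [gU_mul]

/-- Every homomorphism UT₃(𝔽₃) → ℂˣ is one of the ρ_{r,s}. -/
theorem UT3_one_dim_rep_classification (φ : UT3 →* ℂˣ) :
    ∃ r s : ZMod 3,
      ∀ a b c : ZMod 3, (φ (gU a b c) : ℂ) = ω ^ (r * a + s * c).val := by
  obtain ⟨r, hr⟩ := isPrimitiveRoot_ω.exists_apply_ofAdd_eq_pow_val (φ.comp gUHomA)
  obtain ⟨s, hs⟩ := isPrimitiveRoot_ω.exists_apply_ofAdd_eq_pow_val (φ.comp gUHomC)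
  refine ⟨r, s, fun a b c => ?_⟩
  rw [gU_eq_center_mul, map_mul, map_gU_center, one_mul, map_mul, Units.val_mul,
    pow_zmod_val_add isPrimitiveRoot_ω.pow_eq_one, mul_comm]
  exact congrArg₂ (· * ·) (hr a) (hs c)
end

section
/- For each k ∈ {1,2}, the representation ρ_k of UT₃(𝔽₃) on ZMod 3 → ℂ is irreducible: every ℂ-linear subspace p of (ZMod 3 → ℂ) satisfying ρ_k(g)(v) ∈ p for all g ∈ UT₃(𝔽₃) and all v ∈ p is either the zero subspace or the whole space. -/
open Matrix

/-- The linear map ρ_k(g(a,b,c)) acting on ZMod 3 → ℂ. -/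
noncomputable def rhoMap (k : ℕ) (a b c : ZMod 3) : (ZMod 3 → ℂ) →ₗ[ℂ] (ZMod 3 → ℂ) where
  toFun φ := fun n => ω ^ ((k • (b + n * c)).val) * φ (n + a)
  map_add' φ ψ := by funext n; simp [mul_add]
  map_smul' r φ := by funext n; simp [smul_eq_mul]; ring


/-!
The elements `g(a,0,0)` act by translation `v ↦ v (· + a)` and the elements `g(0,0,c)` by
modulation `v ↦ ψ (c * ·) * v` with the character `ψ x = ω ^ (k * x).val`, which is primitive
because `k` is a unit mod 3. By orthogonality of the characters `ψ (c * ·)`, averaging the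
modulations of `v ∈ p` against `ψ (-(c * m))` yields `N • v m • δ_m ∈ p`; if `v m ≠ 0`,
translating gives every delta function, and these span.
-/

namespace AddChar

variable {R : Type*} [CommRing R] [NoZeroDivisors R] {M : Type*} [CommMonoid M]

lemma IsPrimitive.mulShift {ψ : AddChar R M} (hψ : ψ.IsPrimitive) {r : R} (hr : r ≠ 0) :
    (ψ.mulShift r).IsPrimitive := fun a ha => by
  rw [mulShift_mulShift]
  exact hψ (mul_ne_zero hr ha)

end AddChar

namespace ZMod

variable {N : ℕ} [NeZero N] {ψ : AddChar (ZMod N) ℂ} {p : Submodule ℂ (ZMod N → ℂ)}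

lemma single_mem_of_modulate_mem (hψ : ψ.IsPrimitive)
    (hmod : ∀ c, ∀ v ∈ p, (fun n => ψ (c * n) * v n) ∈ p) {v : ZMod N → ℂ} (hv : v ∈ p)
    (m : ZMod N) : Pi.single m (v m) ∈ p := by
  have hsum : ∑ c, ψ (-(c * m)) • (fun n => ψ (c * n) * v n) = (N : ℂ) • Pi.single m (v m) := by
    funext n
    have hterm : ∀ c, ψ (-(c * m)) * (ψ (c * n) * v n) = ψ (c * (n - m)) * v n := fun c => by
      rw [← mul_assoc, ← AddChar.map_add_eq_mul, mul_sub, neg_add_eq_sub]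
    simp only [Finset.sum_apply, Pi.smul_apply, smul_eq_mul, hterm, ← Finset.sum_mul,
      AddChar.sum_mulShift _ hψ, sub_eq_zero, ZMod.card, Pi.single_apply]
    split_ifs with h
    · rw [h]
    · simp
  have hN : (N : ℂ) ≠ 0 := Nat.cast_ne_zero.mpr (NeZero.ne N)
  rw [← p.smul_mem_iff hN, ← hsum]
  exact p.sum_mem fun c _ => p.smul_mem _ (hmod c v hv)

lemma eq_top_of_single_mem (htrans : ∀ a, ∀ v ∈ p, (fun n => v (n + a)) ∈ p) {m : ZMod N}
    {x : ℂ} (hx : x ≠ 0) (hm : Pi.single m x ∈ p) : p = ⊤ := by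
  have hsingle : ∀ j y, Pi.single j y ∈ p := fun j y => by
    have hj : (fun n => (Pi.single m x : ZMod N → ℂ) (n + (m - j))) = Pi.single j x := by
      funext n
      simp only [Pi.single_apply, add_sub_left_comm n m j, add_eq_left, sub_eq_zero]
    have hy : Pi.single j y = (y * x⁻¹) • Pi.single j x := by
      rw [← Pi.single_smul', smul_eq_mul, inv_mul_cancel_right₀ hx]
    rw [hy, ← hj]
    exact p.smul_mem _ (htrans _ _ hm)
  refine eq_top_iff.mpr fun φ _ => ?_
  rw [← Finset.univ_sum_single φ]
  exact p.sum_mem fun j _ => hsingle j (φ j)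

/-- Irreducibility of the Schrödinger representation of the Heisenberg group over `ZMod N`. -/
theorem eq_bot_or_eq_top_of_translate_mem_of_modulate_mem (hψ : ψ.IsPrimitive)
    (htrans : ∀ a, ∀ v ∈ p, (fun n => v (n + a)) ∈ p)
    (hmod : ∀ c, ∀ v ∈ p, (fun n => ψ (c * n) * v n) ∈ p) : p = ⊥ ∨ p = ⊤ := by
  refine or_iff_not_imp_left.mpr fun hp => ?_
  obtain ⟨v, hv, hv0⟩ := (Submodule.ne_bot_iff p).mp hp
  obtain ⟨m, hm⟩ := Function.ne_iff.mp hv0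
  exact eq_top_of_single_mem htrans hm (single_mem_of_modulate_mem hψ hmod hv m)

end ZMod

noncomputable def ωChar : AddChar (ZMod 3) ℂ := AddChar.zmodChar 3 isPrimitiveRoot_ω.pow_eq_one

lemma ωChar_isPrimitive : ωChar.IsPrimitive :=
  AddChar.zmodChar_primitive_of_primitive_root 3 isPrimitiveRoot_ω

lemma rhoMap_translate (k : ℕ) (a : ZMod 3) (v : ZMod 3 → ℂ) :
    rhoMap k a 0 0 v = fun n => v (n + a) := by
  funext n
  simp [rhoMap]

lemma rhoMap_modulate (k : ℕ) (c : ZMod 3) (v : ZMod 3 → ℂ) :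
    rhoMap k 0 0 c v = fun n => ωChar.mulShift k (c * n) * v n := by
  funext n
  simp only [rhoMap, LinearMap.coe_mk, AddHom.coe_mk, AddChar.mulShift_apply, ωChar,
    AddChar.zmodChar_apply, nsmul_eq_mul, zero_add, add_zero, mul_comm c]

/-- For k ∈ {1,2}, the representation ρ_k of UT₃(𝔽₃) on ZMod 3 → ℂ is irreducible. -/
theorem UT3_three_dim_rep_irreducible (k : ℕ) (hk : k = 1 ∨ k = 2)
    (p : Submodule ℂ (ZMod 3 → ℂ))
    (hp : ∀ a b c : ZMod 3, ∀ v ∈ p, rhoMap k a b c v ∈ p) :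
    p = ⊥ ∨ p = ⊤ := by
  have hk0 : (k : ZMod 3) ≠ 0 := by rcases hk with rfl | rfl <;> decide
  refine ZMod.eq_bot_or_eq_top_of_translate_mem_of_modulate_mem
    (ωChar_isPrimitive.mulShift hk0) (fun a v hv => ?_) (fun c v hv => ?_)
  · simpa only [rhoMap_translate] using hp a 0 0 v hv
  · simpa only [rhoMap_modulate] using hp 0 0 c v hv
end
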